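/- Let n ≥ 1, let k ≥ 2 be even, and let f₁, …, f_r : (Fin n → ZMod 2) → (Fin n → ZMod 2) be arbitrary round functions for any number of rounds r ≥ 0. For every initial state (L₁⁰, …, L_k⁰, R⁰) of the n:kn-UFN2, the XOR of all k+1 blocks is invariant: L₁^r ⊕ L₂^r ⊕ ⋯ ⊕ L_k^r ⊕ R^r = L₁⁰ ⊕ L₂⁰ ⊕ ⋯ ⊕ L_k⁰ ⊕ R⁰, where (L₁^r, …, L_k^r, R^r) is the state after r rounds. -/

import Mathlib

/-!
A round moves `R` into the first left block and adds `f R` to each of the `k` left blocks, so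
it changes the XOR of all blocks by `k` copies of `f R`. Over `ZMod 2` these cancel when `k` is
even, and the invariant follows by induction on the number of rounds.
-/

/-- An `n`-bit block, i.e. a bit string of length `n`. -/
abbrev Blk (n : ℕ) : Type := Fin n → ZMod 2

/-- The state of a `(k+1)`-block Feistel network: `k+1` blocks of `n` bits each. -/
abbrev St (n k : ℕ) : Type := Fin (k + 1) → Blk n

/-- One round of the `n:kn`-UFN2 with round function `f : Blk n → Blk n`:
`(L₁, …, L_k, R) ↦ (R, L₁ ⊕ f R, …, L_k ⊕ f R)`.
State coordinates `0, …, k-1` are `L₁, …, L_k` and coordinate `k` is `R`. -/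
def ufn2Round {n k : ℕ} (f : Blk n → Blk n) (s : St n k) : St n k :=
  fun i =>
    if h : (i : ℕ) = 0 then s (Fin.last k)
    else s ⟨(i : ℕ) - 1, by have := i.isLt; omega⟩ + f (s (Fin.last k))

/-- The `r`-round `n:kn`-UFN2 with round functions `f 0, …, f (r-1)`, applied with `f 0`
first. -/
def ufn2Run {n k : ℕ} : (r : ℕ) → (Fin r → (Blk n → Blk n)) → St n k → St n k
  | 0, _, s => s
  | r + 1, f, s => ufn2Round (f (Fin.last r)) (ufn2Run r (fun i => f i.castSucc) s)

theorem Even.nsmul_eq_zero_of_module_zmod_two {M : Type*} [AddCommGroup M] [Module (ZMod 2) M]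
    {k : ℕ} (hk : Even k) (v : M) : k • v = 0 := by
  rw [← Nat.cast_smul_eq_nsmul (ZMod 2), (ZMod.natCast_eq_zero_iff_even).2 hk, zero_smul]

section ufn2Round

variable {n k : ℕ} (f : Blk n → Blk n) (s : St n k)

@[simp]
theorem ufn2Round_zero : ufn2Round f s 0 = s (Fin.last k) := rfl

@[simp]
theorem ufn2Round_succ (i : Fin k) :
    ufn2Round f s i.succ = s i.castSucc + f (s (Fin.last k)) := rfl

theorem sum_ufn2Round :
    ∑ i, ufn2Round f s i = ∑ i, s i + k • f (s (Fin.last k)) := by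
  rw [Fin.sum_univ_succ, Fin.sum_univ_castSucc (f := s)]
  simp only [ufn2Round_zero, ufn2Round_succ, Finset.sum_add_distrib, Finset.sum_const,
    Finset.card_univ, Fintype.card_fin]
  abel

theorem sum_ufn2Round_of_even (hk : Even k) : ∑ i, ufn2Round f s i = ∑ i, s i := by
  rw [sum_ufn2Round, hk.nsmul_eq_zero_of_module_zmod_two, add_zero]

end ufn2Round

theorem ufn2_even_block_xor_invariant_general (n k r : ℕ) (hke : Even k)
    (f : Fin r → (Blk n → Blk n)) (x : St n k) :
    ∑ i : Fin (k + 1), ufn2Run r f x i = ∑ i : Fin (k + 1), x i := by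
  induction r with
  | zero => rfl
  | succ r ih => rw [ufn2Run, sum_ufn2Round_of_even _ _ hke, ih]

/-- **invariant underlying Theorem 4.1.** If `k ≥ 2` is even, then for any
number of rounds `r` and arbitrary round functions, the XOR of all `k+1` blocks of the state
of the `n:kn`-UFN2 is invariant:
`L₁^r ⊕ ⋯ ⊕ L_k^r ⊕ R^r = L₁⁰ ⊕ ⋯ ⊕ L_k⁰ ⊕ R⁰`. -/
theorem ufn2_even_block_xor_invariant (n k r : ℕ) (hn : 1 ≤ n) (hk : 2 ≤ k) (hke : Even k)
    (f : Fin r → (Blk n → Blk n)) (x : St n k) :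
    ∑ i : Fin (k + 1), ufn2Run r f x i = ∑ i : Fin (k + 1), x i :=
  ufn2_even_block_xor_invariant_general n k r hke f x
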